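/- Let σ, M, m, ħ > 0, w ≥ 0, x₀, x₀', v₀, v₀' ∈ ℝ³, let Ω_{x₀,v₀}(x) = (2πσ²)^{−3/4} exp(−|x−x₀|²/(4σ²)) exp((i/ħ) m x·v₀) be coherent states, and let K : ℝ³ × ℝ³ → ℂ be measurable with |K(x,y)| ≤ w for all x, y. Then the coherent-state matrix element of the damped kernel satisfies |∫∫_{ℝ³×ℝ³} conj(Ω_{x₀',v₀'}(x)) · exp(−(M²/(2σ²))|x−y|²) · K(x,y) · Ω_{x₀,v₀}(y) dx dy| ≤ (8πσ²/(1+4M²))^{3/2} · exp(−M²|x₀−x₀'|²/(2(1+4M²)σ²)) · w. In particular, for M ≥ 1/2 the matrix element between coherent states whose position labels satisfy |x₀−x₀'| ≫ σ is negligibly small, so after Galilean decoherence the statistical operator is sharply concentrated near the diagonal x₀ = x₀' in the coherent-state representation. -/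

import Mathlib

/-!
The phases of the coherent states have modulus one, so the integrand is dominated by
`w (2πσ²)^(-3/2)` times the Gaussian chain
`exp (-a ‖x - x₀'‖²) exp (-b ‖x - y‖²) exp (-c ‖y - x₀‖²)` with `a = c = 1/(4σ²)`, `b = M²/(2σ²)`.
Completing the square turns a product of two Gaussians centred at `u` and `v` into one centred at
a weighted mean times `exp (-(a c / (a + c)) ‖u - v‖²)`; integrating out `y` and then `x` gives
the chain in closed form, `(π² / S)^(d/2) exp (-(a b c / S) ‖x₀' - x₀‖²)` with `S = a b + b c + c a`.
-/

open MeasureTheory Real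
open scoped RealInnerProductSpace ComplexConjugate

noncomputable section

abbrev E3 := EuclideanSpace ℝ (Fin 3)

/-- The (squeezed) coherent state with position label `x₀` and velocity label `v₀`. -/
noncomputable def coh (σ m hbar : ℝ) (x₀ v₀ : E3) (x : E3) : ℂ :=
  (((2 * Real.pi * σ ^ 2) ^ (-(3 : ℝ) / 4) : ℝ) : ℂ) *
    Complex.exp ((-‖x - x₀‖ ^ 2 / (4 * σ ^ 2) : ℝ) : ℂ) *
    Complex.exp ((Complex.I / (hbar : ℂ)) * (m : ℂ) * ((⟪x, v₀⟫ : ℝ) : ℂ))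

open Module

section Gaussian

variable {V : Type*} [NormedAddCommGroup V] [InnerProductSpace ℝ V]

theorem mul_sq_norm_sub_add_mul_sq_norm_sub {a c : ℝ} (h : a + c ≠ 0) (u v y : V) :
    a * ‖y - u‖ ^ 2 + c * ‖y - v‖ ^ 2 =
      (a + c) * ‖y - ((a / (a + c)) • u + (c / (a + c)) • v)‖ ^ 2 +
        a * c / (a + c) * ‖u - v‖ ^ 2 := by
  simp only [← real_inner_self_eq_norm_sq, inner_sub_left, inner_sub_right, inner_add_left,
    inner_add_right, real_inner_smul_left, real_inner_smul_right, real_inner_comm u v,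
    real_inner_comm u y, real_inner_comm v y]
  field_simp
  ring

theorem exp_neg_mul_sq_norm_sub_mul_exp {a c : ℝ} (h : a + c ≠ 0) (u v y : V) :
    rexp (-a * ‖y - u‖ ^ 2) * rexp (-c * ‖y - v‖ ^ 2) =
      rexp (-(a + c) * ‖y - ((a / (a + c)) • u + (c / (a + c)) • v)‖ ^ 2) *
        rexp (-(a * c / (a + c)) * ‖u - v‖ ^ 2) := by
  rw [← exp_add, ← exp_add]
  congr 1
  linarith [mul_sq_norm_sub_add_mul_sq_norm_sub h u v y]

variable [FiniteDimensional ℝ V] [MeasurableSpace V] [BorelSpace V]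

theorem integral_exp_neg_mul_sq_norm_sub {b : ℝ} (hb : 0 < b) (p : V) :
    ∫ y : V, rexp (-b * ‖y - p‖ ^ 2) = (π / b) ^ (finrank ℝ V / 2 : ℝ) := by
  rw [integral_sub_right_eq_self (fun y : V => rexp (-b * ‖y‖ ^ 2)) p]
  exact GaussianFourier.integral_rexp_neg_mul_sq_norm hb

theorem integrable_exp_neg_mul_sq_norm_sub {b : ℝ} (hb : 0 < b) (p : V) :
    Integrable fun y : V => rexp (-b * ‖y - p‖ ^ 2) :=
  Integrable.of_integral_ne_zero <| by
    rw [integral_exp_neg_mul_sq_norm_sub hb]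
    positivity

theorem integral_exp_neg_mul_sq_norm_sub_mul_exp {a c : ℝ} (h : 0 < a + c) (u v : V) :
    ∫ y : V, rexp (-a * ‖y - u‖ ^ 2) * rexp (-c * ‖y - v‖ ^ 2) =
      (π / (a + c)) ^ (finrank ℝ V / 2 : ℝ) * rexp (-(a * c / (a + c)) * ‖u - v‖ ^ 2) := by
  simp_rw [exp_neg_mul_sq_norm_sub_mul_exp h.ne']
  rw [integral_mul_const, integral_exp_neg_mul_sq_norm_sub h]

theorem integrable_exp_neg_mul_sq_norm_sub_mul_exp {a c : ℝ} (h : 0 < a + c) (u v : V) :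
    Integrable fun y : V => rexp (-a * ‖y - u‖ ^ 2) * rexp (-c * ‖y - v‖ ^ 2) := by
  simp_rw [exp_neg_mul_sq_norm_sub_mul_exp h.ne']
  exact (integrable_exp_neg_mul_sq_norm_sub h _).mul_const _

end Gaussian

section GaussianChain

variable {V : Type*} [NormedAddCommGroup V]

def gaussianChain (a b c : ℝ) (u v x y : V) : ℝ :=
  rexp (-a * ‖x - u‖ ^ 2) * rexp (-b * ‖x - y‖ ^ 2) * rexp (-c * ‖y - v‖ ^ 2)

theorem gaussianChain_eq (a b c : ℝ) (u v x : V) : gaussianChain a b c u v x =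
    fun y => rexp (-a * ‖x - u‖ ^ 2) * (rexp (-b * ‖y - x‖ ^ 2) * rexp (-c * ‖y - v‖ ^ 2)) := by
  ext y
  rw [gaussianChain, norm_sub_rev x y, mul_assoc]

variable [InnerProductSpace ℝ V] [FiniteDimensional ℝ V] [MeasurableSpace V] [BorelSpace V]
  {a b c : ℝ}

theorem integrable_gaussianChain (hbc : 0 < b + c) (u v x : V) :
    Integrable (gaussianChain a b c u v x) := by
  rw [gaussianChain_eq]
  exact (integrable_exp_neg_mul_sq_norm_sub_mul_exp hbc x v).const_mul _

theorem integral_gaussianChain (hbc : 0 < b + c) (u v x : V) :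
    ∫ y, gaussianChain a b c u v x y = (π / (b + c)) ^ (finrank ℝ V / 2 : ℝ) *
      (rexp (-a * ‖x - u‖ ^ 2) * rexp (-(b * c / (b + c)) * ‖x - v‖ ^ 2)) := by
  rw [gaussianChain_eq, integral_const_mul, integral_exp_neg_mul_sq_norm_sub_mul_exp hbc]
  ring

theorem integrable_integral_gaussianChain (ha : 0 < a) (hb : 0 ≤ b) (hc : 0 < c) (u v : V) :
    Integrable fun x => ∫ y, gaussianChain a b c u v x y := by
  simp_rw [integral_gaussianChain (add_pos_of_nonneg_of_pos hb hc)]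
  exact (integrable_exp_neg_mul_sq_norm_sub_mul_exp (by positivity) u v).const_mul _

theorem integral_integral_gaussianChain (ha : 0 < a) (hb : 0 ≤ b) (hc : 0 < c) (u v : V) :
    ∫ x, ∫ y, gaussianChain a b c u v x y =
      (π ^ 2 / (a * b + b * c + c * a)) ^ (finrank ℝ V / 2 : ℝ) *
        rexp (-(a * b * c / (a * b + b * c + c * a)) * ‖u - v‖ ^ 2) := by
  have hbc := (add_pos_of_nonneg_of_pos hb hc).ne'
  have hprefactor :
      π / (b + c) * (π / (a + b * c / (b + c))) = π ^ 2 / (a * b + b * c + c * a) := by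
    field_simp
    ring
  have hexponent : a * (b * c / (b + c)) / (a + b * c / (b + c)) =
      a * b * c / (a * b + b * c + c * a) := by
    field_simp
    ring
  simp_rw [integral_gaussianChain (add_pos_of_nonneg_of_pos hb hc)]
  rw [integral_const_mul, integral_exp_neg_mul_sq_norm_sub_mul_exp (by positivity),
    ← mul_assoc, ← mul_rpow (by positivity) (by positivity), hprefactor, hexponent]

end GaussianChain

theorem norm_integral_integral_le_of_norm_le {α β E : Type*} [MeasurableSpace α]
    [MeasurableSpace β] [NormedAddCommGroup E] [NormedSpace ℝ E] {μ : Measure α} {ν : Measure β}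
    {F : α → β → E} {g : α → β → ℝ} (hg : ∀ x, Integrable (g x) ν)
    (hG : Integrable (fun x => ∫ y, g x y ∂ν) μ) (hFg : ∀ x y, ‖F x y‖ ≤ g x y) :
    ‖∫ x, ∫ y, F x y ∂ν ∂μ‖ ≤ ∫ x, ∫ y, g x y ∂ν ∂μ :=
  norm_integral_le_of_norm_le hG <| ae_of_all _ fun x =>
    norm_integral_le_of_norm_le (hg x) (ae_of_all _ (hFg x))

theorem norm_coh (σ m hbar : ℝ) (x₀ v₀ x : E3) :
    ‖coh σ m hbar x₀ v₀ x‖ =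
      (2 * π * σ ^ 2) ^ (-(3 : ℝ) / 4) * rexp (-(4 * σ ^ 2)⁻¹ * ‖x - x₀‖ ^ 2) := by
  have hphase : ((Complex.I / (hbar : ℂ)) * (m : ℂ) * ((⟪x, v₀⟫ : ℝ) : ℂ)).re = 0 := by
    simp [Complex.div_re, Complex.mul_re]
  rw [coh, norm_mul, norm_mul, Complex.norm_real, Complex.norm_exp, Complex.norm_exp, hphase,
    Complex.ofReal_re, exp_zero, mul_one, norm_of_nonneg (by positivity)]
  congr 2
  ring

theorem norm_coh_damped_kernel_coh_le {σ M m hbar w : ℝ} {x₀ x₀' v₀ v₀' : E3}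
    {K : E3 × E3 → ℂ} (hbound : ∀ x y : E3, ‖K (x, y)‖ ≤ w) (x y : E3) :
    ‖conj (coh σ m hbar x₀' v₀' x) *
        Complex.exp ((-(M ^ 2 / (2 * σ ^ 2)) * ‖x - y‖ ^ 2 : ℝ) : ℂ) *
        K (x, y) * coh σ m hbar x₀ v₀ y‖ ≤
      ((2 * π * σ ^ 2) ^ (-(3 : ℝ) / 4)) ^ 2 * w *
        gaussianChain (4 * σ ^ 2)⁻¹ (M ^ 2 / (2 * σ ^ 2)) (4 * σ ^ 2)⁻¹ x₀' x₀ x y := by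
  set N := (2 * π * σ ^ 2) ^ (-(3 : ℝ) / 4)
  set g := gaussianChain (4 * σ ^ 2)⁻¹ (M ^ 2 / (2 * σ ^ 2)) (4 * σ ^ 2)⁻¹ x₀' x₀ x y with hg
  rw [norm_mul, norm_mul, norm_mul, Complex.norm_conj, norm_coh, norm_coh, Complex.norm_exp,
    Complex.ofReal_re]
  calc _ = N ^ 2 * g * ‖K (x, y)‖ := by
        rw [hg, gaussianChain]
        ring
    _ ≤ N ^ 2 * g * w := by
        refine mul_le_mul_of_nonneg_left (hbound x y) ?_
        rw [hg, gaussianChain]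
        positivity
    _ = N ^ 2 * w * g := by ring

theorem coherent_matrix_element_bound_general
    {σ M m hbar w : ℝ} (hσ : 0 < σ)
    (x₀ x₀' v₀ v₀' : E3) (K : E3 × E3 → ℂ)
    (hbound : ∀ x y : E3, ‖K (x, y)‖ ≤ w) :
    ‖(∫ x : E3, ∫ y : E3,
        conj (coh σ m hbar x₀' v₀' x) *
        Complex.exp ((-(M ^ 2 / (2 * σ ^ 2)) * ‖x - y‖ ^ 2 : ℝ) : ℂ) *
        K (x, y) * coh σ m hbar x₀ v₀ y)‖ ≤
    (8 * Real.pi * σ ^ 2 / (1 + 4 * M ^ 2)) ^ ((3 : ℝ) / 2) *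
      Real.exp (-(M ^ 2 * ‖x₀ - x₀'‖ ^ 2) / (2 * (1 + 4 * M ^ 2) * σ ^ 2)) * w := by
  have ha : 0 < (4 * σ ^ 2)⁻¹ := by positivity
  have hb : 0 ≤ M ^ 2 / (2 * σ ^ 2) := by positivity
  refine (norm_integral_integral_le_of_norm_le
    (fun x => (integrable_gaussianChain (add_pos_of_nonneg_of_pos hb ha) x₀' x₀ x).const_mul _)
    (by simpa only [integral_const_mul] using
      (integrable_integral_gaussianChain ha hb ha x₀' x₀).const_mul _)
    (norm_coh_damped_kernel_coh_le hbound)).trans_eq ?_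
  simp only [integral_const_mul]
  rw [integral_integral_gaussianChain ha hb ha, finrank_euclideanSpace_fin]
  set a := (4 * σ ^ 2)⁻¹
  set b := M ^ 2 / (2 * σ ^ 2)
  have hprefactor : ((2 * π * σ ^ 2) ^ (-(3 : ℝ) / 4)) ^ 2 *
      (π ^ 2 / (a * b + b * a + a * a)) ^ ((3 : ℝ) / 2) =
      (8 * π * σ ^ 2 / (1 + 4 * M ^ 2)) ^ ((3 : ℝ) / 2) := by
    rw [← rpow_natCast, ← rpow_mul (by positivity),
      show -(3 : ℝ) / 4 * (2 : ℕ) = -(3 / 2) by norm_num, rpow_neg (by positivity),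
      ← inv_rpow (by positivity), ← mul_rpow (by positivity) (by positivity)]
    congr 1
    simp only [a, b]
    field_simp
    ring
  have hexponent : -(a * b * a / (a * b + b * a + a * a)) * ‖x₀' - x₀‖ ^ 2 =
      -(M ^ 2 * ‖x₀ - x₀'‖ ^ 2) / (2 * (1 + 4 * M ^ 2) * σ ^ 2) := by
    simp only [a, b]
    rw [norm_sub_rev]
    field_simp
    ring
  rw [Nat.cast_ofNat, hexponent, ← hprefactor]
  ring

/-- Bound on the coherent-state matrix element of a Gaussian-damped kernel:
after Galilean decoherence the statistical operator is sharply concentrated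
near the diagonal `x₀ = x₀'` in the coherent-state representation. -/
theorem coherent_matrix_element_bound
    {σ M m hbar w : ℝ} (hσ : 0 < σ) (hM : 0 < M) (hm : 0 < m) (hhbar : 0 < hbar)
    (hw : 0 ≤ w) (x₀ x₀' v₀ v₀' : E3) (K : E3 × E3 → ℂ) (hmeas : Measurable K)
    (hbound : ∀ x y : E3, ‖K (x, y)‖ ≤ w) :
    ‖(∫ x : E3, ∫ y : E3,
        conj (coh σ m hbar x₀' v₀' x) *
        Complex.exp ((-(M ^ 2 / (2 * σ ^ 2)) * ‖x - y‖ ^ 2 : ℝ) : ℂ) *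
        K (x, y) * coh σ m hbar x₀ v₀ y)‖ ≤
    (8 * Real.pi * σ ^ 2 / (1 + 4 * M ^ 2)) ^ ((3 : ℝ) / 2) *
      Real.exp (-(M ^ 2 * ‖x₀ - x₀'‖ ^ 2) / (2 * (1 + 4 * M ^ 2) * σ ^ 2)) * w :=
  coherent_matrix_element_bound_general hσ x₀ x₀' v₀ v₀' K hbound
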